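/- arXiv:1905.04750 — 3 statements merged into one kernel-verified Lean document; each statement's English description precedes it below -/
import Mathlib

section
/- Fix d ≥ 2 and q ∈ [1,∞). Let D(d,p) be the number of primitive points of Z^d with all coordinates nonnegative and q-norm at most p. Then D(d,p)/p^d → Γ(1/q+1)^d/(Γ(d/q+1)·ζ(d)) as p → ∞. -/
open Filter Pointwise

def IsPrimitive {d : ℕ} (x : Fin d → ℤ) : Prop :=
  x ≠ 0 ∧ Finset.univ.gcd x = 1

def FirstNonzeroPos {d : ℕ} (x : Fin d → ℤ) : Prop :=
  ∃ i, 0 < x i ∧ ∀ j, j < i → x j = 0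

def norm1 {d : ℕ} (x : Fin d → ℤ) : ℕ := ∑ i, (x i).natAbs
noncomputable def zetaR (d : ℕ) : ℝ := ∑' n : ℕ, (1 : ℝ) / (n + 1) ^ d

/-
Without the primitivity condition the count is a lattice-point count in a dilated convex body:
the unit orthant ball `{y ≥ 0 | ∑ |y i| ^ q ≤ 1}` is bounded and convex, so the number `N(r)` of
lattice points in its `r`-dilate is asymptotic to `V r ^ d`, where `V` is its volume. By sign
symmetry `V` is `2⁻ᵈ` times the volume `(2 Γ(1/q + 1)) ^ d / Γ(d/q + 1)` of the full `q`-ball.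

A nonzero lattice point `x` is `k` times a lattice point of the ball of radius `r / k` exactly
when `k` divides `gcd x`, so Möbius inversion gives `D(r) = ∑ₖ μ(k) N'(r / k)`, where `N'` counts
nonzero points. Since `N'(r) ≤ (2r) ^ d`, dominated convergence yields
`D(p) / p ^ d → V ∑ₖ μ(k) / k ^ d = V / ζ(d)`.
-/

open MeasureTheory Topology

section OrthantVolume

open Set

variable {ι : Type*} [Fintype ι]

lemma volume_abs_preimage {t : Set ℝ} (ht : MeasurableSet t) :
    volume (abs ⁻¹' t) = 2 * volume (t ∩ Ici 0) := by
  have hunion : abs ⁻¹' t = (t ∩ Ici 0) ∪ -(t ∩ Ici 0) := by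
    ext y
    rcases lt_trichotomy y 0 with hy | rfl | hy
    · simp [abs_of_neg hy, hy.le, hy.not_ge]
    · simp
    · simp [abs_of_pos hy, hy.le, hy.not_ge]
  have hnull : volume ((t ∩ Ici 0) ∩ -(t ∩ Ici 0)) = 0 :=
    measure_mono_null (fun y ⟨⟨_, hy⟩, _, hy'⟩ => le_antisymm (neg_nonneg.1 hy') hy)
      (measure_singleton 0)
  rw [hunion, measure_union₀ (ht.inter measurableSet_Ici).neg.nullMeasurableSet hnull,
    Measure.measure_neg, two_mul]

lemma map_abs_volume : (volume : Measure ℝ).map abs = (2 : NNReal) • volume.restrict (Ici 0) := by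
  ext t ht
  rw [Measure.map_apply measurable_abs ht, volume_abs_preimage ht]
  simp [Measure.restrict_apply ht]

lemma map_abs_volume_pi :
    (volume : Measure (ι → ℝ)).map (fun y i => |y i|) =
      (2 : NNReal) ^ Fintype.card ι • volume.restrict (univ.pi fun _ => Ici 0) := by
  have : SigmaFinite ((volume : Measure ℝ).map abs) := by rw [map_abs_volume]; infer_instance
  rw [volume_pi, Measure.pi_map_pi fun _ => measurable_abs.aemeasurable]
  simp_rw [map_abs_volume]
  refine Measure.pi_eq fun s hs => ?_
  rw [Measure.smul_apply, Measure.restrict_apply (.univ_pi hs), ← pi_inter_distrib, Measure.pi_pi]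
  simp [Finset.prod_mul_distrib, Measure.restrict_apply (hs _), ENNReal.smul_def]

theorem volume_eq_two_pow_mul_volume_inter_orthant {s : Set (ι → ℝ)} (hs : MeasurableSet s)
    (hsymm : ∀ y, (fun i => |y i|) ∈ s ↔ y ∈ s) :
    volume s = 2 ^ Fintype.card ι * volume (s ∩ univ.pi fun _ => Ici 0) := by
  have hO : MeasurableSet (univ.pi fun (_ : ι) => Ici (0 : ℝ)) :=
    .univ_pi fun _ => measurableSet_Ici
  have hpre : (fun y i => |y i|) ⁻¹' (s ∩ univ.pi fun _ => Ici 0) = s := by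
    ext y
    simp [hsymm, Pi.le_def]
  have hmeas : Measurable fun (y : ι → ℝ) i => |y i| := by fun_prop
  conv_lhs => rw [← hpre, ← Measure.map_apply hmeas (hs.inter hO), map_abs_volume_pi]
  simp [inter_assoc, ENNReal.smul_def]

end OrthantVolume

section OrthantBall

open Set

variable {ι : Type*} [Fintype ι] {q r : ℝ}

def orthantBall (ι : Type*) [Fintype ι] (q r : ℝ) : Set (ι → ℝ) :=
  {y | (∀ i, 0 ≤ y i) ∧ ∑ i, |y i| ^ q ≤ r ^ q}

lemma smul_orthantBall {c : ℝ} (hc : 0 < c) (hr : 0 ≤ r) :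
    c • orthantBall ι q r = orthantBall ι q (c * r) := by
  ext y
  have hsum : ∑ i, |c⁻¹ * y i| ^ q = (c ^ q)⁻¹ * ∑ i, |y i| ^ q := by
    simp_rw [Finset.mul_sum, abs_mul, abs_inv, abs_of_pos hc,
      Real.mul_rpow (inv_nonneg.2 hc.le) (abs_nonneg _), Real.inv_rpow hc.le]
  simp only [mem_smul_set_iff_inv_smul_mem₀ hc.ne', orthantBall, mem_ofPred_eq, Pi.smul_apply,
    smul_eq_mul, hsum, Real.mul_rpow hc.le hr, inv_mul_le_iff₀ (Real.rpow_pos_of_pos hc q)]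
  simp [mul_nonneg_iff_of_pos_left (inv_pos.2 hc)]

lemma orthantBall_mono (hq : 0 < q) {r' : ℝ} (hr : 0 ≤ r) (hrr' : r ≤ r') :
    orthantBall ι q r ⊆ orthantBall ι q r' :=
  fun _ hy => ⟨hy.1, hy.2.trans (Real.rpow_le_rpow hr hrr' hq.le)⟩

lemma abs_le_of_mem_orthantBall (hq : 0 < q) (hr : 0 ≤ r) {y : ι → ℝ}
    (hy : y ∈ orthantBall ι q r) (i : ι) : |y i| ≤ r := by
  refine (Real.rpow_le_rpow_iff (abs_nonneg _) hr hq).1 (le_trans ?_ hy.2)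
  exact Finset.single_le_sum (f := fun i => |y i| ^ q) (fun i _ => by positivity)
    (Finset.mem_univ i)

lemma isBounded_orthantBall (hq : 0 < q) (hr : 0 ≤ r) : Bornology.IsBounded (orthantBall ι q r) :=
  (Metric.isBounded_closedBall (x := 0) (r := r)).subset fun _ hy => mem_closedBall_zero_iff.2 <|
    (pi_norm_le_iff_of_nonneg hr).2 fun i => abs_le_of_mem_orthantBall hq hr hy i

lemma isClosed_orthantBall (hq : 0 < q) : IsClosed (orthantBall ι q r) := by
  have hsum : Continuous fun y : ι → ℝ => ∑ i, |y i| ^ q :=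
    continuous_finsetSum _ fun i _ => (continuous_apply i).abs.rpow_const fun _ => Or.inr hq.le
  simp only [orthantBall, ofPred_and, ofPred_forall]
  exact (isClosed_iInter fun i => isClosed_le continuous_const (continuous_apply i)).inter
    (isClosed_le hsum continuous_const)

lemma convex_orthantBall (hq : 1 ≤ q) : Convex ℝ (orthantBall ι q r) := by
  set O := {y : ι → ℝ | ∀ i, 0 ≤ y i}
  have hO : Convex ℝ O := by
    simp only [O, ofPred_forall]
    exact convex_iInter fun i => convex_halfSpace_ge (LinearMap.proj i).isLinear 0
  have hf : ConvexOn ℝ O fun y => ∑ i, y i ^ q := by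
    rw [← Finset.sum_fn]
    refine Finset.sum_induction _ (ConvexOn ℝ O) (fun _ _ => ConvexOn.add) (convexOn_const 0 hO)
      fun i _ => ((convexOn_rpow hq).comp_linearMap
        (LinearMap.proj (R := ℝ) (φ := fun _ : ι => ℝ) i)).subset
          (fun _ (hy : _ ∈ O) => hy i) hO
  convert hf.convex_le (r ^ q) using 1
  ext y
  refine and_congr_right fun (hy : y ∈ O) => ?_
  simp_rw [abs_of_nonneg (hy _)]

lemma volume_orthantBall_one [Nonempty ι] (hq : 1 ≤ q) :
    volume (orthantBall ι q 1) =
      .ofReal (Real.Gamma (1 / q + 1) ^ Fintype.card ι / Real.Gamma (Fintype.card ι / q + 1)) := by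
  have hq0 : 0 < q := by linarith
  have hB : {y : ι → ℝ | (∑ i, |y i| ^ q) ^ (1 / q) ≤ 1} = {y | ∑ i, |y i| ^ q ≤ 1} := by
    ext y
    have hS : 0 ≤ ∑ i, |y i| ^ q := by positivity
    rw [mem_ofPred_eq, ← Real.rpow_le_rpow_iff (by positivity) zero_le_one hq0,
      ← Real.rpow_mul hS, one_div_mul_cancel hq0.ne', Real.rpow_one, Real.one_rpow]
    rfl
  have hBO : {y : ι → ℝ | ∑ i, |y i| ^ q ≤ 1} ∩ (univ.pi fun _ => Ici 0) = orthantBall ι q 1 := by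
    ext y
    simp [orthantBall, and_comm, Pi.le_def]
  have h := volume_eq_two_pow_mul_volume_inter_orthant
    (measurableSet_le (by fun_prop) measurable_const) (s := {y : ι → ℝ | ∑ i, |y i| ^ q ≤ 1})
    (fun y => by simp)
  rw [hBO, ← hB, volume_sum_rpow_le (ι := ι) hq, ENNReal.ofReal_one, one_pow, one_mul, mul_pow,
    mul_div_assoc, ENNReal.ofReal_mul (by positivity), ENNReal.ofReal_pow zero_le_two,
    ENNReal.ofReal_ofNat] at h
  exact (ENNReal.mul_right_inj (by positivity) (by simp)).1 h.symm

end OrthantBall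

section LatticePoints

open Finset

variable {ι : Type*} [Fintype ι] {q r : ℝ}

open Classical in
noncomputable def latticeOrthantBall (ι : Type*) [Fintype ι] (q r : ℝ) : Finset (ι → ℤ) :=
  (Fintype.piFinset fun _ => Icc 0 (⌊r⌋₊ : ℤ)).filter
    fun x => (fun i => (x i : ℝ)) ∈ orthantBall ι q r

lemma mem_Icc_of_mem_latticeOrthantBall {x : ι → ℤ} (hx : x ∈ latticeOrthantBall ι q r) (i : ι) :
    x i ∈ Icc 0 (⌊r⌋₊ : ℤ) := by
  classical
  rw [latticeOrthantBall, mem_filter, Fintype.mem_piFinset] at hx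
  exact hx.1 i

lemma mem_latticeOrthantBall (hq : 0 < q) (hr : 0 ≤ r) {x : ι → ℤ} :
    x ∈ latticeOrthantBall ι q r ↔ (fun i => (x i : ℝ)) ∈ orthantBall ι q r := by
  classical
  rw [latticeOrthantBall, mem_filter, Fintype.mem_piFinset, and_iff_right_iff_imp]
  intro hx i
  have hxi : 0 ≤ x i := Int.cast_nonneg_iff.1 (hx.1 i)
  have hle := abs_le_of_mem_orthantBall hq hr hx i
  rw [abs_of_nonneg (by exact_mod_cast hxi)] at hle
  rw [mem_Icc, Int.natCast_floor_eq_floor hr, Int.le_floor]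
  exact ⟨hxi, hle⟩

lemma zero_mem_latticeOrthantBall (hq : 0 < q) (hr : 0 ≤ r) : 0 ∈ latticeOrthantBall ι q r := by
  rw [mem_latticeOrthantBall hq hr]
  refine ⟨fun _ => by simp, ?_⟩
  simp [Real.zero_rpow hq.ne', Real.rpow_nonneg hr]

lemma smul_mem_latticeOrthantBall (hq : 0 < q) (hr : 0 ≤ r) {k : ℕ} (hk : 0 < k) {y : ι → ℤ} :
    (k : ℤ) • y ∈ latticeOrthantBall ι q r ↔ y ∈ latticeOrthantBall ι q (r / k) := by
  have hk' : (0 : ℝ) < k := Nat.cast_pos.2 hk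
  have hcast : (fun i => (((k : ℤ) • y) i : ℝ)) = (k : ℝ) • fun i => (y i : ℝ) := by
    ext i
    simp
  rw [mem_latticeOrthantBall hq hr, mem_latticeOrthantBall hq (div_nonneg hr hk'.le), hcast,
    ← Set.smul_mem_smul_set_iff₀ hk'.ne' (orthantBall ι q (r / k)),
    smul_orthantBall hk' (div_nonneg hr hk'.le), mul_div_cancel₀ _ hk'.ne']

lemma card_latticeOrthantBall_le : #(latticeOrthantBall ι q r) ≤ (⌊r⌋₊ + 1) ^ Fintype.card ι := by
  classical
  exact (card_filter_le _ _).trans (by simp)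

lemma erase_zero_latticeOrthantBall_of_lt_one (hr : r < 1) :
    (latticeOrthantBall ι q r).erase 0 = ∅ := by
  refine eq_empty_of_forall_notMem fun x hx => (mem_erase.1 hx).1 (funext fun i => ?_)
  have := mem_Icc_of_mem_latticeOrthantBall (mem_erase.1 hx).2 i
  rw [Nat.floor_eq_zero.2 hr] at this
  simpa using this

lemma card_erase_zero_latticeOrthantBall_le (hr : 0 ≤ r) :
    (#((latticeOrthantBall ι q r).erase 0) : ℝ) ≤ 2 ^ Fintype.card ι * r ^ Fintype.card ι := by
  rcases lt_or_ge r 1 with hr1 | hr1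
  · rw [erase_zero_latticeOrthantBall_of_lt_one hr1, card_empty, Nat.cast_zero]
    positivity
  calc (#((latticeOrthantBall ι q r).erase 0) : ℝ)
      ≤ (⌊r⌋₊ + 1 : ℝ) ^ Fintype.card ι := by
        exact_mod_cast card_erase_le.trans card_latticeOrthantBall_le
    _ ≤ (2 * r) ^ Fintype.card ι := by gcongr; linarith [Nat.floor_le hr]
    _ = 2 ^ Fintype.card ι * r ^ Fintype.card ι := mul_pow _ _ _

lemma card_filter_dvd_erase_zero_latticeOrthantBall (hq : 0 < q) (hr : 0 ≤ r) {k : ℕ}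
    (hk : 0 < k) :
    #(((latticeOrthantBall ι q r).erase 0).filter fun x => ∀ i, (k : ℤ) ∣ x i) =
      #((latticeOrthantBall ι q (r / k)).erase 0) := by
  have hk0 : (k : ℤ) ≠ 0 := by exact_mod_cast hk.ne'
  have hdiv : ∀ x : ι → ℤ, (∀ i, (k : ℤ) ∣ x i) → (k : ℤ) • (fun i => x i / k) = x :=
    fun x hx => funext fun i => Int.mul_ediv_cancel' (hx i)
  refine card_nbij' (fun x i => x i / k) (fun y => (k : ℤ) • y) ?_ ?_ ?_ ?_
  · intro x hx
    simp only [coe_filter, mem_erase, Set.mem_ofPred_eq] at hx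
    obtain ⟨⟨hx0, hx⟩, hxk⟩ := hx
    rw [← hdiv x hxk, smul_mem_latticeOrthantBall hq hr hk] at hx
    refine mem_coe.2 (mem_erase.2 ⟨fun h => hx0 ?_, hx⟩)
    rw [← hdiv x hxk, show (fun i => x i / (k : ℤ)) = 0 from h, smul_zero]
  · intro y hy
    obtain ⟨hy0, hy⟩ := mem_erase.1 (mem_coe.1 hy)
    simp only [coe_filter, mem_erase, Set.mem_ofPred_eq]
    refine ⟨⟨smul_ne_zero hk0 hy0, (smul_mem_latticeOrthantBall hq hr hk).2 hy⟩, fun i => ?_⟩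
    exact dvd_mul_right _ _
  · intro x hx
    simp only [coe_filter, Set.mem_ofPred_eq] at hx
    exact hdiv x hx.2
  · intro y _
    funext i
    exact Int.mul_ediv_cancel_left _ hk0

lemma natCard_orthantBall_inter_inv_smul_span (hq : 0 < q) (hr : 0 < r) :
    Nat.card ↑(orthantBall ι q 1 ∩
        r⁻¹ • (Submodule.span ℤ (Set.range (Pi.basisFun ℝ ι)) : Set (ι → ℝ))) =
      #(latticeOrthantBall ι q r) := by
  have hinj : Function.Injective fun (x : ι → ℤ) => r⁻¹ • fun i => (x i : ℝ) := by
    intro x y hxy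
    funext i
    simpa [hr.ne'] using congrFun hxy i
  have hset : orthantBall ι q 1 ∩
      r⁻¹ • (Submodule.span ℤ (Set.range (Pi.basisFun ℝ ι)) : Set (ι → ℝ)) =
        (fun (x : ι → ℤ) => r⁻¹ • fun i => (x i : ℝ)) '' latticeOrthantBall ι q r := by
    ext y
    rw [Set.mem_inter_iff, Set.mem_inv_smul_set_iff₀ hr.ne', SetLike.mem_coe,
      Module.Basis.mem_span_iff_repr_mem, ← Set.smul_mem_smul_set_iff₀ hr.ne',
      smul_orthantBall hr zero_le_one, mul_one]
    simp only [Pi.basisFun_repr, Set.mem_range, algebraMap_int_eq, eq_intCast, Set.mem_image,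
      mem_coe, mem_latticeOrthantBall hq hr.le]
    constructor
    · rintro ⟨hy, hint⟩
      choose x hx using hint
      have hxy : (fun i => (x i : ℝ)) = r • y := funext hx
      exact ⟨x, hxy ▸ hy, by rw [hxy, inv_smul_smul₀ hr.ne']⟩
    · rintro ⟨x, hx, rfl⟩
      rw [smul_inv_smul₀ hr.ne']
      exact ⟨hx, fun i => ⟨x i, rfl⟩⟩
  rw [hset, Nat.card_image_of_injective hinj, Nat.card_coe_set_eq, Set.ncard_coe_finset]

theorem tendsto_card_latticeOrthantBall_div_pow [Nonempty ι] (hq : 1 ≤ q) :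
    Tendsto (fun r : ℝ => (#(latticeOrthantBall ι q r) : ℝ) / r ^ Fintype.card ι) atTop
      (𝓝 (Real.Gamma (1 / q + 1) ^ Fintype.card ι / Real.Gamma (Fintype.card ι / q + 1))) := by
  have hq0 : 0 < q := by linarith
  have hmono : ∀ ⦃x y : ℝ⦄, 0 < x → x ≤ y → x • orthantBall ι q 1 ⊆ y • orthantBall ι q 1 := by
    intro x y hx hxy
    rw [smul_orthantBall hx zero_le_one, smul_orthantBall (hx.trans_le hxy) zero_le_one, mul_one,
      mul_one]
    exact orthantBall_mono hq0 hx.le hxy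
  have h := tendsto_card_div_pow_atTop_volume' _ (isBounded_orthantBall hq0 zero_le_one)
    (isClosed_orthantBall hq0).measurableSet ((convex_orthantBall hq).addHaar_frontier volume) hmono
  rw [measureReal_def, volume_orthantBall_one hq, ENNReal.toReal_ofReal (by positivity)] at h
  refine h.congr' ?_
  filter_upwards [eventually_gt_atTop 0] with r hr
  rw [natCard_orthantBall_inter_inv_smul_span hq0 hr]

theorem tendsto_card_erase_zero_latticeOrthantBall_div_pow [Nonempty ι] (hq : 1 ≤ q) :
    Tendsto (fun r : ℝ => (#((latticeOrthantBall ι q r).erase 0) : ℝ) / r ^ Fintype.card ι) atTop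
      (𝓝 (Real.Gamma (1 / q + 1) ^ Fintype.card ι / Real.Gamma (Fintype.card ι / q + 1))) := by
  have h := (tendsto_card_latticeOrthantBall_div_pow (ι := ι) hq).sub
    (tendsto_pow_atTop (Fintype.card_ne_zero (α := ι))).inv_tendsto_atTop
  rw [sub_zero] at h
  refine h.congr' ?_
  filter_upwards [eventually_ge_atTop 0] with r hr
  rw [card_erase_of_mem (zero_mem_latticeOrthantBall (by linarith) hr),
    Nat.cast_sub (card_pos.2 ⟨0, zero_mem_latticeOrthantBall (by linarith) hr⟩), sub_div,
    Nat.cast_one, one_div, Pi.inv_apply]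

end LatticePoints

section Moebius

open Finset ArithmeticFunction
open scoped ArithmeticFunction.Moebius

variable {d : ℕ} {q r : ℝ}

instance : DecidablePred (IsPrimitive (d := d)) :=
  fun x => inferInstanceAs (Decidable (x ≠ 0 ∧ _))

lemma sum_divisors_moebius (n : ℕ) : ∑ k ∈ n.divisors, μ k = if n = 1 then 1 else 0 := by
  rw [← coe_mul_zeta_apply, moebius_mul_coe_zeta, one_apply]

lemma isPrimitive_iff_natAbs_gcd {x : Fin d → ℤ} (hx : x ≠ 0) :
    IsPrimitive x ↔ (univ.gcd x).natAbs = 1 := by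
  have hg : 0 ≤ univ.gcd x := Int.nonneg_of_normalize_eq_self (normalize_gcd (s := univ) (f := x))
  rw [IsPrimitive, and_iff_right hx]
  omega

lemma sum_moebius_dvd_eq_ite_isPrimitive {x : Fin d → ℤ} (hx : x ≠ 0) {N : ℕ}
    (hN : ∀ i, (x i).natAbs ≤ N) :
    ∑ k ∈ Icc 1 N, (if ∀ i, (k : ℤ) ∣ x i then μ k else 0) = if IsPrimitive x then 1 else 0 := by
  set n := (univ.gcd x).natAbs
  have hdvd : ∀ k : ℕ, (∀ i, (k : ℤ) ∣ x i) ↔ k ∣ n := fun k => by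
    rw [← Int.natCast_dvd, Finset.dvd_gcd_iff]
    simp
  obtain ⟨i, hi⟩ : ∃ i, x i ≠ 0 := Function.ne_iff.1 hx
  have hn0 : n ≠ 0 := fun h => hi (gcd_eq_zero_iff.1 (Int.natAbs_eq_zero.1 h) i (mem_univ i))
  have hnN : n ≤ N := (Nat.le_of_dvd (Int.natAbs_pos.2 hi)
    (Int.natAbs_dvd_natAbs.2 (gcd_dvd (mem_univ i)))).trans (hN i)
  have hdiv : (Icc 1 N).filter (· ∣ n) = n.divisors := by
    ext k
    rw [mem_filter, mem_Icc, Nat.mem_divisors]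
    constructor
    · exact fun h => ⟨h.2, hn0⟩
    · exact fun h => ⟨⟨Nat.pos_of_dvd_of_pos h.1 (Nat.pos_of_ne_zero hn0),
        (Nat.le_of_dvd (Nat.pos_of_ne_zero hn0) h.1).trans hnN⟩, h.1⟩
  simp_rw [hdvd, ← sum_filter, hdiv, sum_divisors_moebius, isPrimitive_iff_natAbs_gcd hx, n]

theorem card_filter_isPrimitive_eq_sum_moebius (A : Finset (Fin d → ℤ)) (hA : 0 ∉ A)
    {N : ℕ} (hN : ∀ x ∈ A, ∀ i, (x i).natAbs ≤ N) :
    (#(A.filter IsPrimitive) : ℤ) =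
      ∑ k ∈ Icc 1 N, μ k * #(A.filter fun x => ∀ i, (k : ℤ) ∣ x i) := by
  simp_rw [card_filter, Nat.cast_sum, mul_sum, Nat.cast_ite, Nat.cast_one, Nat.cast_zero,
    mul_ite, mul_one, mul_zero]
  rw [sum_comm]
  refine sum_congr rfl fun x hx => ?_
  rw [sum_moebius_dvd_eq_ite_isPrimitive (ne_of_mem_of_not_mem hx hA) (hN x hx)]

theorem card_filter_isPrimitive_latticeOrthantBall_eq_tsum (hq : 0 < q) (hr : 0 ≤ r) :
    (#((latticeOrthantBall (Fin d) q r).filter IsPrimitive) : ℝ) =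
      ∑' k : ℕ, (μ k : ℝ) * #((latticeOrthantBall (Fin d) q (r / k)).erase 0) := by
  have hA : ((latticeOrthantBall (Fin d) q r).erase 0).filter IsPrimitive =
      (latticeOrthantBall (Fin d) q r).filter IsPrimitive := by
    rw [filter_erase, erase_eq_of_notMem]
    simp [IsPrimitive]
  have hN : ∀ x ∈ (latticeOrthantBall (Fin d) q r).erase 0, ∀ i, (x i).natAbs ≤ ⌊r⌋₊ :=
      fun x hx i => by
    have := mem_Icc.1 (mem_Icc_of_mem_latticeOrthantBall (mem_erase.1 hx).2 i)
    omega
  have h := card_filter_isPrimitive_eq_sum_moebius _ (notMem_erase 0 _) hN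
  have hdil : ∀ k ∈ Icc 1 ⌊r⌋₊,
      #(((latticeOrthantBall (Fin d) q r).erase 0).filter fun x => ∀ i, (k : ℤ) ∣ x i) =
        #((latticeOrthantBall (Fin d) q (r / k)).erase 0) := fun k hk => by
    convert card_filter_dvd_erase_zero_latticeOrthantBall hq hr (mem_Icc.1 hk).1
  rw [hA, sum_congr rfl fun k hk => by rw [hdil k hk]] at h
  rw [tsum_eq_sum (s := Icc 1 ⌊r⌋₊) fun k hk => ?_]
  · exact_mod_cast h
  -- The other terms vanish: `μ 0 = 0`, and for `k > r` the radius `r / k` is below `1`.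
  rcases Nat.eq_zero_or_pos k with rfl | hk0
  · simp
  have hrk : r / k < 1 := by
    rw [div_lt_one (Nat.cast_pos.2 hk0)]
    exact Nat.lt_of_floor_lt (by simp only [mem_Icc, not_and_or, not_le] at hk; omega)
  rw [erase_zero_latticeOrthantBall_of_lt_one hrk, card_empty, Nat.cast_zero, mul_zero]

end Moebius

theorem tendsto_tsum_mul_div_pow {d : ℕ} (hd : 2 ≤ d) {c : ℕ → ℝ} (hc : ∀ k, |c k| ≤ 1)
    {f : ℝ → ℝ} {L C : ℝ} (hf : Tendsto (fun r => f r / r ^ d) atTop (𝓝 L))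
    (hfC : ∀ r, 0 ≤ r → |f r| ≤ C * r ^ d) :
    Tendsto (fun n : ℕ => (∑' k : ℕ, c k * f (n / k)) / n ^ d) atTop
      (𝓝 (L * ∑' k : ℕ, c k / k ^ d)) := by
  have hd0 : d ≠ 0 := by omega
  have hf0 : f 0 = 0 := abs_nonpos_iff.1 (by simpa [zero_pow hd0] using hfC 0 le_rfl)
  have hterm : ∀ k : ℕ, Tendsto (fun n : ℕ => c k * f (n / k) / n ^ d) atTop
      (𝓝 (L * (c k / k ^ d))) := by
    intro k
    rcases Nat.eq_zero_or_pos k with rfl | hk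
    -- `n / 0 = 0`, so the `k = 0` term is `c 0 * f 0 / n ^ d = 0`.
    · simp [hf0, zero_pow hd0]
    have hk' : (0 : ℝ) < k := Nat.cast_pos.2 hk
    rw [mul_comm]
    refine ((hf.comp (tendsto_natCast_atTop_atTop.atTop_div_const hk')).const_mul
      (c k / k ^ d)).congr' ?_
    filter_upwards [eventually_gt_atTop 0] with n hn
    have hn' : (0 : ℝ) < n := Nat.cast_pos.2 hn
    simp only [Function.comp_apply, div_pow]
    field_simp
  have hbound : ∀ᶠ n : ℕ in atTop, ∀ k, ‖c k * f (n / k) / n ^ d‖ ≤ C * (1 / (k : ℝ) ^ d) := by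
    filter_upwards [eventually_gt_atTop 0] with n hn k
    have hn' : (0 : ℝ) < (n : ℝ) ^ d := pow_pos (Nat.cast_pos.2 hn) d
    calc ‖c k * f (n / k) / n ^ d‖ = |c k| * |f (n / k)| / n ^ d := by
          rw [Real.norm_eq_abs, abs_div, abs_mul, abs_of_pos hn']
      _ ≤ 1 * (C * (n / k) ^ d) / n ^ d := by
          gcongr
          exacts [hc k, hfC _ (by positivity)]
      _ = C * (1 / (k : ℝ) ^ d) := by
          rw [one_mul, mul_div_assoc, div_pow, div_right_comm, div_self hn'.ne']
  have hsum : Summable fun k : ℕ => C * (1 / (k : ℝ) ^ d) :=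
    (Real.summable_one_div_nat_pow.2 (by omega)).mul_left C
  simpa only [tsum_div_const, tsum_mul_left] using
    tendsto_tsum_of_dominated_convergence hsum hterm hbound

section Zeta

open ArithmeticFunction
open scoped ArithmeticFunction.Moebius

lemma ofReal_zetaR {d : ℕ} (hd : 1 < d) : (zetaR d : ℂ) = riemannZeta d := by
  rw [zeta_eq_tsum_one_div_nat_add_one_cpow (by simpa using hd), zetaR, Complex.ofReal_tsum]
  refine tsum_congr fun n => ?_
  push_cast
  rw [Complex.cpow_natCast]

lemma ofReal_tsum_moebius_div_pow (d : ℕ) :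
    ((∑' k : ℕ, (μ k : ℝ) / k ^ d : ℝ) : ℂ) = LSeries (fun k => (μ k : ℂ)) d := by
  rw [LSeries, Complex.ofReal_tsum]
  refine tsum_congr fun k => ?_
  rcases eq_or_ne k 0 with rfl | hk
  · simp
  rw [LSeries.term_of_ne_zero hk, Complex.cpow_natCast]
  push_cast
  rfl

theorem tsum_moebius_div_pow {d : ℕ} (hd : 1 < d) : ∑' k : ℕ, (μ k : ℝ) / k ^ d = (zetaR d)⁻¹ := by
  have h := LSeries_zeta_mul_Lseries_moebius (s := d) (by simpa using hd)
  rw [LSeries_zeta_eq_riemannZeta (by simpa using hd), ← ofReal_zetaR hd,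
    ← ofReal_tsum_moebius_div_pow, ← Complex.ofReal_mul, Complex.ofReal_eq_one] at h
  exact eq_inv_of_mul_eq_one_right h

end Zeta

open Finset ArithmeticFunction in
open scoped ArithmeticFunction.Moebius in
/-- The number D(d,p) of nonnegative primitive points of ℤ^d with q-norm ≤ p satisfies
D(d,p)/p^d → Γ(1/q+1)^d/(Γ(d/q+1)·ζ(d)). -/
theorem stmt_13 (d : ℕ) (hd : 2 ≤ d) (q : ℝ) (hq : 1 ≤ q) :
    Tendsto
      (fun p : ℕ =>
        (Nat.card {x : Fin d → ℤ //
            IsPrimitive x ∧ (∀ j, 0 ≤ x j) ∧ ∑ j, |(x j : ℝ)| ^ q ≤ (p : ℝ) ^ q} : ℝ)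
          / (p : ℝ) ^ d)
      atTop (nhds (Real.Gamma (1 / q + 1) ^ d / (Real.Gamma (d / q + 1) * zetaR d))) := by
  have : NeZero d := ⟨by omega⟩
  have hq0 : 0 < q := by linarith
  have hcard : ∀ p : ℕ, Nat.card {x : Fin d → ℤ //
      IsPrimitive x ∧ (∀ j, 0 ≤ x j) ∧ ∑ j, |(x j : ℝ)| ^ q ≤ (p : ℝ) ^ q} =
        #((latticeOrthantBall (Fin d) q p).filter IsPrimitive) := fun p => by
    rw [← Nat.card_eq_finsetCard]
    refine Nat.card_congr (Equiv.subtypeEquivRight fun x => ?_)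
    simp [mem_latticeOrthantBall hq0 p.cast_nonneg, orthantBall, and_comm]
  have h := tendsto_tsum_mul_div_pow hd (c := fun k => (μ k : ℝ))
    (fun k => by exact_mod_cast abs_moebius_le_one)
    (by simpa using tendsto_card_erase_zero_latticeOrthantBall_div_pow (ι := Fin d) hq)
    (fun r hr => by simpa using card_erase_zero_latticeOrthantBall_le (ι := Fin d) (q := q) hr)
  rw [tsum_moebius_div_pow (by omega), ← div_eq_mul_inv, div_div, ← one_div] at h
  refine h.congr fun p => ?_
  rw [hcard, card_filter_isPrimitive_latticeOrthantBall_eq_tsum hq0 p.cast_nonneg]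
end

section
/- Fix d ≥ 2 and q ∈ [1,∞). With D(d,p) the number of primitive points of Z^d with nonnegative coordinates and q-norm at most p, and P(d,p) the total number of primitive points of Z^d with q-norm at most p, one has 0 ≤ 2^d·D(d,p) − P(d,p) ≤ d·2^{d−1}·D(d−1,p) for all p. -/
open Filter Pointwise

/-!
The primitive points of the ball form a set `S` that is invariant under the sign changes
`x ↦ ε • x`, `ε ∈ {±1}^d`. The map `x ↦ (|x|, sign pattern of x)` embeds `S` into pairs `(y, ε)`
of a nonnegative point `y ∈ S` and a sign vector, which gives `P(d) ≤ 2^d D(d)`.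
Conversely, a pair `(y, ε)` is recovered from `ε • y ∈ S` unless `ε` flips some zero coordinate
`k` of `y`. Such a pair is determined by `k` together with `y` and `ε` with their `k`-th coordinates
removed, and deleting a zero coordinate keeps a point primitive and in the ball of dimension
`d - 1`; hence `2^d D(d) ≤ P(d) + d 2^(d-1) D(d-1)`.
-/

theorem Finset.gcd_eq_of_associated {α β : Type*} [CommMonoidWithZero α] [NormalizedGCDMonoid α]
    {s : Finset β} {f g : β → α} (h : ∀ b ∈ s, Associated (f b) (g b)) :
    s.gcd f = s.gcd g := by
  simpa only [normalize_gcd] using normalize_eq_normalize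
    (gcd_mono_fun fun b hb => (h b hb).dvd) (gcd_mono_fun fun b hb => (h b hb).symm.dvd)

theorem Fin.gcd_removeNth {α : Type*} [CommMonoidWithZero α] [NormalizedGCDMonoid α]
    {n : ℕ} {x : Fin (n + 1) → α} {k : Fin (n + 1)} (hk : x k = 0) :
    Finset.univ.gcd (k.removeNth x) = Finset.univ.gcd x := by
  have hdvd : Finset.univ.gcd (k.removeNth x) ∣ Finset.univ.gcd x := by
    refine Finset.dvd_gcd fun j _ => ?_
    rcases Fin.eq_self_or_eq_succAbove k j with rfl | ⟨i, rfl⟩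
    · simp [hk]
    · exact Finset.gcd_dvd (Finset.mem_univ i)
  simpa only [Finset.normalize_gcd] using normalize_eq_normalize hdvd
    (Finset.dvd_gcd fun i _ => Finset.gcd_dvd (Finset.mem_univ (k.succAbove i)))

theorem Fin.eq_of_removeNth_eq {n : ℕ} {α : Type*} {x y : Fin (n + 1) → α} {k : Fin (n + 1)}
    (hk : x k = y k) (h : k.removeNth x = k.removeNth y) : x = y := by
  rw [← Fin.insertNth_self_removeNth k x, ← Fin.insertNth_self_removeNth k y, hk, h]

section SignPatterns

variable {d : ℕ}

def signPattern (x : Fin d → ℤ) : Fin d → ℤˣ := fun j => if x j < 0 then -1 else 1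

theorem signPattern_smul_self (x : Fin d → ℤ) : signPattern x • x = |x| := by
  ext j
  by_cases h : x j < 0 <;> simp [signPattern, h, abs_of_neg, abs_of_nonneg, not_lt.mp]

theorem signPattern_smul_abs (x : Fin d → ℤ) : signPattern x • |x| = x := by
  ext j
  by_cases h : x j < 0 <;> simp [signPattern, h, abs_of_neg, abs_of_nonneg, not_lt.mp]

theorem abs_units_smul (ε : Fin d → ℤˣ) (x : Fin d → ℤ) : |ε • x| = |x| := by
  ext j
  simp [Units.smul_def, abs_mul, Int.isUnit_iff_abs_eq.mp (ε j).isUnit]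

theorem eq_of_units_smul_eq_units_smul {ε ε' : Fin d → ℤˣ} {y y' : Fin d → ℤ}
    (hy : 0 ≤ y) (hy' : 0 ≤ y') (hε : ∀ k, y k = 0 → ε k ≠ -1) (hε' : ∀ k, y' k = 0 → ε' k ≠ -1)
    (h : ε • y = ε' • y') : y = y' ∧ ε = ε' := by
  have hyy : y = y' := by
    rw [← abs_of_nonneg hy, ← abs_of_nonneg hy', ← abs_units_smul ε, h, abs_units_smul]
  subst hyy
  refine ⟨rfl, funext fun k => ?_⟩
  by_cases hk : y k = 0
  · have one_of_ne (u : ℤˣ) (hu : u ≠ -1) : u = 1 := (Int.units_eq_one_or u).resolve_right hu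
    rw [one_of_ne _ (hε k hk), one_of_ne _ (hε' k hk)]
  · exact Units.ext (mul_right_cancel₀ hk (by simpa [Units.smul_def] using congrFun h k))

variable {S : Set (Fin d → ℤ)}

theorem card_le_two_pow_mul_card_nonneg (hS : S.Finite)
    (hsign : ∀ ε : Fin d → ℤˣ, ∀ x ∈ S, ε • x ∈ S) :
    Nat.card S ≤ 2 ^ d * Nat.card {x ∈ S | 0 ≤ x} := by
  have := (hS.subset (Set.sep_subset S (0 ≤ ·))).to_subtype
  let f : S → {x ∈ S | 0 ≤ x} × (Fin d → ℤˣ) := fun x =>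
    (⟨|x.1|, signPattern_smul_self x.1 ▸ hsign _ x.1 x.2, abs_nonneg _⟩, signPattern x.1)
  have hf : f.Injective := fun a b hab => Subtype.ext <| by
    rw [← signPattern_smul_abs a.1, ← signPattern_smul_abs b.1]
    exact congrArg₂ (· • ·) (congrArg Prod.snd hab) (congrArg (Subtype.val ∘ Prod.fst) hab)
  simpa [Nat.card_prod, mul_comm] using Nat.card_le_card_of_injective f hf

theorem two_pow_mul_card_nonneg_le_card_add (hS : S.Finite)
    (hsign : ∀ ε : Fin d → ℤˣ, ∀ x ∈ S, ε • x ∈ S) :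
    2 ^ d * Nat.card {x ∈ S | 0 ≤ x} ≤ Nat.card S +
      ∑ k, Nat.card {z : {x ∈ S | 0 ≤ x} × (Fin d → ℤˣ) // z.1.1 k = 0 ∧ z.2 k = -1} := by
  have := hS.to_subtype
  have := (hS.subset (Set.sep_subset S (0 ≤ ·))).to_subtype
  let f : {x ∈ S | 0 ≤ x} × (Fin d → ℤˣ) →
      S ⊕ Σ k, {z : {x ∈ S | 0 ≤ x} × (Fin d → ℤˣ) // z.1.1 k = 0 ∧ z.2 k = -1} := fun z =>
    if h : ∃ k, z.1.1 k = 0 ∧ z.2 k = -1 then .inr ⟨h.choose, z, h.choose_spec⟩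
    else .inl ⟨z.2 • z.1.1, hsign _ _ z.1.2.1⟩
  have hf : f.Injective := by
    rintro ⟨a, εa⟩ ⟨b, εb⟩ hab
    by_cases ha : ∃ k, a.1 k = 0 ∧ εa k = -1 <;> by_cases hb : ∃ k, b.1 k = 0 ∧ εb k = -1 <;>
      simp only [f, ha, hb, dite_true, dite_false, reduceCtorEq] at hab
    · exact congrArg (fun s => s.2.1) (Sum.inr.inj hab)
    · push Not at ha hb
      obtain ⟨hy, hε⟩ :=
        eq_of_units_smul_eq_units_smul a.2.2 b.2.2 ha hb (congrArg Subtype.val (Sum.inl.inj hab))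
      rw [Subtype.ext hy, hε]
  simpa [Nat.card_prod, Nat.card_sum, Nat.card_sigma, mul_comm]
    using Nat.card_le_card_of_injective f hf

end SignPatterns

theorem card_flipped_zero_coord_le {n : ℕ} {S : Set (Fin (n + 1) → ℤ)} {T : Set (Fin n → ℤ)}
    (hT : T.Finite) (hrem : ∀ k, ∀ x ∈ S, x k = 0 → k.removeNth x ∈ T) (k : Fin (n + 1)) :
    Nat.card {z : {x ∈ S | 0 ≤ x} × (Fin (n + 1) → ℤˣ) // z.1.1 k = 0 ∧ z.2 k = -1} ≤
      2 ^ n * Nat.card {x ∈ T | 0 ≤ x} := by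
  have := (hT.subset (Set.sep_subset T (0 ≤ ·))).to_subtype
  let f : {z : {x ∈ S | 0 ≤ x} × (Fin (n + 1) → ℤˣ) // z.1.1 k = 0 ∧ z.2 k = -1} →
      {x ∈ T | 0 ≤ x} × (Fin n → ℤˣ) := fun z =>
    (⟨k.removeNth z.1.1.1, hrem k _ z.1.1.2.1 z.2.1, fun _ => z.1.1.2.2 _⟩, k.removeNth z.1.2)
  have hf : f.Injective := by
    rintro ⟨⟨a, εa⟩, ha⟩ ⟨⟨b, εb⟩, hb⟩ hab
    have hy :=
      Fin.eq_of_removeNth_eq (ha.1.trans hb.1.symm) (congrArg (Subtype.val ∘ Prod.fst) hab)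
    have hε := Fin.eq_of_removeNth_eq (ha.2.trans hb.2.symm) (congrArg Prod.snd hab)
    rw [Subtype.mk.injEq, Prod.mk.injEq]
    exact ⟨Subtype.ext hy, hε⟩
  simpa [Nat.card_prod, mul_comm] using Nat.card_le_card_of_injective f hf

theorem two_pow_mul_card_nonneg_le {n : ℕ} {S : Set (Fin (n + 1) → ℤ)} {T : Set (Fin n → ℤ)}
    (hS : S.Finite) (hT : T.Finite) (hsign : ∀ ε : Fin (n + 1) → ℤˣ, ∀ x ∈ S, ε • x ∈ S)
    (hrem : ∀ k, ∀ x ∈ S, x k = 0 → k.removeNth x ∈ T) :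
    2 ^ (n + 1) * Nat.card {x ∈ S | 0 ≤ x} ≤
      Nat.card S + (n + 1) * 2 ^ n * Nat.card {x ∈ T | 0 ≤ x} :=
  calc 2 ^ (n + 1) * Nat.card {x ∈ S | 0 ≤ x}
      ≤ Nat.card S + ∑ k, Nat.card
          {z : {x ∈ S | 0 ≤ x} × (Fin (n + 1) → ℤˣ) // z.1.1 k = 0 ∧ z.2 k = -1} :=
        two_pow_mul_card_nonneg_le_card_add hS hsign
    _ ≤ Nat.card S + ∑ _k : Fin (n + 1), 2 ^ n * Nat.card {x ∈ T | 0 ≤ x} :=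
        Nat.add_le_add_left (Finset.sum_le_sum fun k _ => card_flipped_zero_coord_le hT hrem k) _
    _ = Nat.card S + (n + 1) * 2 ^ n * Nat.card {x ∈ T | 0 ≤ x} := by simp [mul_assoc]

theorem isPrimitive_iff {d : ℕ} {x : Fin d → ℤ} : IsPrimitive x ↔ Finset.univ.gcd x = 1 := by
  refine ⟨And.right, fun h => ⟨?_, h⟩⟩
  rintro rfl
  simp [Finset.gcd_eq_zero_iff.mpr] at h

theorem IsPrimitive.units_smul {d : ℕ} {x : Fin d → ℤ} (hx : IsPrimitive x) (ε : Fin d → ℤˣ) :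
    IsPrimitive (ε • x) := by
  rw [isPrimitive_iff] at hx ⊢
  rw [← hx]
  exact Finset.gcd_eq_of_associated fun j _ => associated_unit_mul_left (x j) _ (ε j).isUnit

theorem IsPrimitive.removeNth {n : ℕ} {x : Fin (n + 1) → ℤ} (hx : IsPrimitive x)
    {k : Fin (n + 1)} (hk : x k = 0) : IsPrimitive (k.removeNth x) := by
  rwa [isPrimitive_iff, Fin.gcd_removeNth hk, ← isPrimitive_iff]

def primitiveBall (d : ℕ) (q : ℝ) (p : ℕ) : Set (Fin d → ℤ) :=
  {x | IsPrimitive x ∧ ∑ j, |(x j : ℝ)| ^ q ≤ (p : ℝ) ^ q}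

section PrimitiveBall

variable {d n : ℕ} {q : ℝ} {p : ℕ}

theorem abs_le_of_mem_primitiveBall (hq : 0 < q) {x : Fin d → ℤ} (hx : x ∈ primitiveBall d q p)
    (j : Fin d) : |x j| ≤ p := by
  have hxj : |(x j : ℝ)| ^ q ≤ (p : ℝ) ^ q :=
    (Finset.single_le_sum (fun i _ => by positivity) (Finset.mem_univ j)).trans hx.2
  rw [Real.rpow_le_rpow_iff (abs_nonneg _) p.cast_nonneg hq] at hxj
  exact_mod_cast hxj

theorem finite_primitiveBall (d : ℕ) (hq : 0 < q) (p : ℕ) : (primitiveBall d q p).Finite :=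
  (Set.finite_Icc (-(p : Fin d → ℤ)) p).subset fun _ hx =>
    ⟨fun j => (abs_le.mp (abs_le_of_mem_primitiveBall hq hx j)).1,
      fun j => (abs_le.mp (abs_le_of_mem_primitiveBall hq hx j)).2⟩

theorem units_smul_mem_primitiveBall {x : Fin d → ℤ} (hx : x ∈ primitiveBall d q p)
    (ε : Fin d → ℤˣ) : ε • x ∈ primitiveBall d q p := by
  refine ⟨hx.1.units_smul ε, le_of_eq_of_le (Finset.sum_congr rfl fun j _ => ?_) hx.2⟩
  simp [Units.smul_def, abs_mul, abs_unit_intCast]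

theorem removeNth_mem_primitiveBall (hq : q ≠ 0) {x : Fin (n + 1) → ℤ}
    (hx : x ∈ primitiveBall (n + 1) q p) {k : Fin (n + 1)} (hk : x k = 0) :
    k.removeNth x ∈ primitiveBall n q p := by
  refine ⟨hx.1.removeNth hk, le_of_eq_of_le ?_ hx.2⟩
  simp [Fin.sum_univ_succAbove _ k, hk, Real.zero_rpow hq, Fin.removeNth]

theorem card_primitive_nonneg_eq :
    Nat.card {x : Fin d → ℤ //
        IsPrimitive x ∧ (∀ j, 0 ≤ x j) ∧ ∑ j, |(x j : ℝ)| ^ q ≤ (p : ℝ) ^ q} =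
      Nat.card {x ∈ primitiveBall d q p | 0 ≤ x} :=
  Nat.card_congr <| Equiv.subtypeEquivRight fun x => by
    simp only [primitiveBall, Set.mem_ofPred_eq, Pi.le_def, Pi.zero_apply]
    tauto

end PrimitiveBall

theorem stmt_14_general (d : ℕ) (q : ℝ) (hq : 1 ≤ q) (p : ℕ) :
    0 ≤ 2 ^ d *
          (Nat.card {x : Fin d → ℤ //
            IsPrimitive x ∧ (∀ j, 0 ≤ x j) ∧ ∑ j, |(x j : ℝ)| ^ q ≤ (p : ℝ) ^ q} : ℤ)
        - (Nat.card {x : Fin d → ℤ //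
            IsPrimitive x ∧ ∑ j, |(x j : ℝ)| ^ q ≤ (p : ℝ) ^ q} : ℤ) ∧
    2 ^ d *
          (Nat.card {x : Fin d → ℤ //
            IsPrimitive x ∧ (∀ j, 0 ≤ x j) ∧ ∑ j, |(x j : ℝ)| ^ q ≤ (p : ℝ) ^ q} : ℤ)
        - (Nat.card {x : Fin d → ℤ //
            IsPrimitive x ∧ ∑ j, |(x j : ℝ)| ^ q ≤ (p : ℝ) ^ q} : ℤ)
      ≤ d * 2 ^ (d - 1) *
          (Nat.card {x : Fin (d - 1) → ℤ //
            IsPrimitive x ∧ (∀ j, 0 ≤ x j) ∧ ∑ j, |(x j : ℝ)| ^ q ≤ (p : ℝ) ^ q} : ℤ) := by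
  have hq0 : 0 < q := by linarith
  change _ ≤ _ - (Nat.card (primitiveBall d q p) : ℤ) ∧
    _ - (Nat.card (primitiveBall d q p) : ℤ) ≤ _
  simp only [card_primitive_nonneg_eq]
  have hlower := card_le_two_pow_mul_card_nonneg (finite_primitiveBall d hq0 p)
    fun ε _ hx => units_smul_mem_primitiveBall hx ε
  refine ⟨sub_nonneg.mpr (by exact_mod_cast hlower), ?_⟩
  cases d with
  | zero => simp
  | succ n =>
    have hupper := two_pow_mul_card_nonneg_le (finite_primitiveBall (n + 1) hq0 p)
      (finite_primitiveBall n hq0 p) (fun ε _ hx => units_smul_mem_primitiveBall hx ε)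
      (fun k _ hx hk => removeNth_mem_primitiveBall hq0.ne' hx hk)
    rw [Nat.add_sub_cancel, sub_le_iff_le_add']
    exact_mod_cast hupper

/-- With D(d,p) the number of nonnegative primitive points of ℤ^d with q-norm ≤ p and
P(d,p) the total number of primitive points of ℤ^d with q-norm ≤ p,
0 ≤ 2^d·D(d,p) − P(d,p) ≤ d·2^(d−1)·D(d−1,p). -/
theorem stmt_14 (d : ℕ) (hd : 2 ≤ d) (q : ℝ) (hq : 1 ≤ q) (p : ℕ) :
    0 ≤ 2 ^ d *
          (Nat.card {x : Fin d → ℤ //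
            IsPrimitive x ∧ (∀ j, 0 ≤ x j) ∧ ∑ j, |(x j : ℝ)| ^ q ≤ (p : ℝ) ^ q} : ℤ)
        - (Nat.card {x : Fin d → ℤ //
            IsPrimitive x ∧ ∑ j, |(x j : ℝ)| ^ q ≤ (p : ℝ) ^ q} : ℤ) ∧
    2 ^ d *
          (Nat.card {x : Fin d → ℤ //
            IsPrimitive x ∧ (∀ j, 0 ≤ x j) ∧ ∑ j, |(x j : ℝ)| ^ q ≤ (p : ℝ) ^ q} : ℤ)
        - (Nat.card {x : Fin d → ℤ //
            IsPrimitive x ∧ ∑ j, |(x j : ℝ)| ^ q ≤ (p : ℝ) ^ q} : ℤ)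
      ≤ d * 2 ^ (d - 1) *
          (Nat.card {x : Fin (d - 1) → ℤ //
            IsPrimitive x ∧ (∀ j, 0 ≤ x j) ∧ ∑ j, |(x j : ℝ)| ^ q ≤ (p : ℝ) ^ q} : ℤ) :=
  stmt_14_general d q hq p
end

section
/- Let Z be a zonotope in R^d that is the Minkowski sum of n pairwise non-collinear line segments. Then the diameter of the graph of Z (vertices and edges) equals n. -/
open Filter Pointwise

noncomputable def primCount (d p : ℕ) : ℕ :=
  Nat.card {x : Fin d → ℤ // IsPrimitive x ∧ norm1 x ≤ p ∧ FirstNonzeroPos x}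

noncomputable def zonotope {d : ℕ} (G : Finset (Fin d → ℝ)) : Set (Fin d → ℝ) :=
  ∑ g ∈ G, segment ℝ 0 g

noncomputable def polytopeGraph {d : ℕ} (P : Set (Fin d → ℝ)) :
    SimpleGraph (Set.extremePoints ℝ P) where
  Adj u v := u ≠ v ∧ IsExtreme ℝ P (segment ℝ u.1 v.1)
  symm := by
    constructor
    intro u v h
    exact ⟨Ne.symm h.1, by rw [segment_symm]; exact h.2⟩
  loopless := by constructor; intro u h; exact h.1 rfl

noncomputable def graphDiam {d : ℕ} (P : Set (Fin d → ℝ)) : ℕ :=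
  sSup {n | ∃ u v, (polytopeGraph P).dist u v = n}

noncomputable def cube (d k : ℕ) : Set (Fin d → ℝ) :=
  {x | ∀ i, 0 ≤ x i ∧ x i ≤ k}

noncomputable def kOf {d : ℕ} (P : Set (Fin d → ℝ)) : ℕ :=
  sInf {k | ∃ t : Fin d → ℤ, ((fun i => (t i : ℝ)) +ᵥ P) ⊆ cube d k}

noncomputable def H1 (d p : ℕ) : Set (Fin d → ℝ) :=
  ∑ᶠ x ∈ {x : Fin d → ℤ | IsPrimitive x ∧ norm1 x ≤ p ∧ FirstNonzeroPos x},
    segment ℝ 0 (fun i => (x i : ℝ))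

/-!
Every vertex of the zonotope is `∑ g ∈ S, g`, where `S` is the set of generators on which some
generic functional `f` is positive: a vertex is separated from its neighbours `x ± g` by a
hyperplane (Hahn–Banach). If the segment between the vertices of `S` and `T` is a face, then every
generator in `S ∆ T` is parallel to it, so by non-collinearity adjacent vertices differ in at most
one generator, and any path between the vertices of `f` and `-f` has length at least `n`.
Conversely, after perturbing two generic functionals so that no functional on the segment between
them vanishes on two generators, moving along that segment crosses the hyperplanes `g⊥` one at a
time; each crossing is an edge of the zonotope, so any two vertices are joined by a path of length
at most `n`.
-/

open Finset
open scoped symmDiff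

lemma mul_le_max_zero {t a : ℝ} (ht : t ∈ Set.Icc (0 : ℝ) 1) : t * a ≤ max a 0 := by
  obtain ⟨h0, h1⟩ := ht
  rcases le_total a 0 with h | h
  · nlinarith [le_max_right a 0]
  · nlinarith [le_max_left a 0]

lemma lerp_mul_pos_of_mul_pos {a b t : ℝ} (hab : 0 < a * b) (ht₀ : 0 ≤ t) (ht₁ : t ≤ 1) :
    0 < ((1 - t) * a + t * b) * a := by
  rcases ht₁.lt_or_eq with ht₁ | rfl
  · nlinarith [mul_pos (sub_pos.2 ht₁) (mul_self_pos.2 (left_ne_zero_of_mul hab.ne')),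
      mul_nonneg ht₀ hab.le]
  · linarith

lemma mul_sub_pos_of_mul_neg {a b : ℝ} (hab : a * b < 0) : 0 < a * (a - b) := by
  nlinarith [sq_nonneg a]

lemma lerp_mul_eq_of_mul_neg {a b : ℝ} (hab : a * b < 0) (t : ℝ) :
    ((1 - t) * a + t * b) * a = a * (a - b) * (a / (a - b) - t) := by
  have : a - b ≠ 0 := right_ne_zero_of_mul (mul_sub_pos_of_mul_neg hab).ne'
  field_simp
  ring

lemma div_sub_mem_Ioo_of_mul_neg {a b : ℝ} (hab : a * b < 0) : a / (a - b) ∈ Set.Ioo (0 : ℝ) 1 := by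
  have h := mul_sub_pos_of_mul_neg hab
  have ha : a ≠ 0 := left_ne_zero_of_mul hab.ne
  rw [← mul_div_mul_left a (a - b) ha, ← pow_two]
  exact ⟨div_pos (by positivity) h, (div_lt_one h).2 (by nlinarith)⟩

lemma mul_eq_mul_of_div_sub_eq {a b a' b' : ℝ} (hab : a * b < 0) (hab' : a' * b' < 0)
    (h : a / (a - b) = a' / (a' - b')) : a * b' = a' * b := by
  have := right_ne_zero_of_mul (mul_sub_pos_of_mul_neg hab).ne'
  have := right_ne_zero_of_mul (mul_sub_pos_of_mul_neg hab').ne'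
  field_simp at h
  linarith

lemma symmDiff_subset_of_subset {α : Type*} [DecidableEq α] {S T G : Finset α} (hS : S ⊆ G)
    (hT : T ⊆ G) : S ∆ T ⊆ G :=
  symmDiff_le_sup.trans (union_subset hS hT)

lemma sub_mem_span_singleton_of_mem_segment {E : Type*} [AddCommGroup E] [Module ℝ E]
    {a b p q : E} (hp : p ∈ segment ℝ a b) (hq : q ∈ segment ℝ a b) : q - p ∈ ℝ ∙ (b - a) := by
  rw [segment_eq_image'] at hp hq
  obtain ⟨θ, -, rfl⟩ := hp
  obtain ⟨η, -, rfl⟩ := hq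
  exact Submodule.mem_span_singleton.2 ⟨η - θ, by module⟩

lemma exists_mem_forall_apply_ne_zero {E : Type*} [NormedAddCommGroup E] [NormedSpace ℝ E]
    {W : Finset E} (hW : (0 : E) ∉ W) {U : Set (StrongDual ℝ E)} (hU : IsOpen U)
    (hne : U.Nonempty) : ∃ f ∈ U, ∀ w ∈ W, f w ≠ 0 := by
  have hdense : Dense (⋂ w ∈ (W : Set E), {f : StrongDual ℝ E | f w ≠ 0}) := by
    refine dense_biInter_of_isOpen (fun w _ => isOpen_ne_fun (continuous_eval_const w)
      continuous_const) W.countable_toSet fun w hw => ?_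
    let K := LinearMap.ker (ContinuousLinearMap.apply ℝ ℝ w : StrongDual ℝ E →ₗ[ℝ] ℝ)
    have hK : K ≠ ⊤ := fun h => by
      obtain ⟨f, hf⟩ := SeparatingDual.exists_ne_zero (R := ℝ) (ne_of_mem_of_not_mem hw hW)
      exact hf (LinearMap.mem_ker.1 (h ▸ Submodule.mem_top : f ∈ K))
    have : {f : StrongDual ℝ E | f w ≠ 0} = (K : Set (StrongDual ℝ E))ᶜ := by
      ext f
      simp [K]
    rw [this, ← interior_eq_empty_iff_dense_compl, ← Set.not_nonempty_iff_eq_empty]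
    exact fun h => hK (K.eq_top_of_nonempty_interior' h)
  obtain ⟨f, hfW, hfU⟩ := hdense.exists_mem_open hU hne
  exact ⟨f, hfU, fun w hw => Set.mem_iInter₂.1 hfW w hw⟩

variable {d : ℕ}

lemma mem_zonotope_iff {G : Finset (Fin d → ℝ)} {x : Fin d → ℝ} :
    x ∈ zonotope G ↔
      ∃ t : (Fin d → ℝ) → ℝ, (∀ g ∈ G, t g ∈ Set.Icc (0 : ℝ) 1) ∧ ∑ g ∈ G, t g • g = x := by
  simp only [zonotope, Set.mem_finsetSum, segment_eq_image, smul_zero, zero_add, Set.mem_image]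
  constructor
  · rintro ⟨y, hy, rfl⟩
    choose! t ht using fun g (hg : g ∈ G) => hy hg
    exact ⟨t, fun g hg => (ht g hg).1, sum_congr rfl fun g hg => (ht g hg).2⟩
  · rintro ⟨t, ht, rfl⟩
    exact ⟨fun g => t g • g, fun {g} hg => ⟨t g, ht g hg, rfl⟩, rfl⟩

lemma convex_zonotope (G : Finset (Fin d → ℝ)) : Convex ℝ (zonotope G) :=
  convex_sum _ fun _ _ => convex_segment _ _

lemma zonotope_eq_convexHull (G : Finset (Fin d → ℝ)) :
    zonotope G = convexHull ℝ (∑ g ∈ G, {0, g}) := by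
  simp_rw [convexHull_sum, convexHull_pair, zonotope]

lemma zonotope_empty : zonotope (∅ : Finset (Fin d → ℝ)) = {0} :=
  sum_empty

lemma zonotope_singleton (g : Fin d → ℝ) : zonotope {g} = segment ℝ 0 g :=
  sum_singleton _ _

lemma zonotope_union {S T : Finset (Fin d → ℝ)} (h : Disjoint S T) :
    zonotope (S ∪ T) = zonotope S + zonotope T :=
  sum_union h

lemma zero_mem_zonotope (G : Finset (Fin d → ℝ)) : (0 : Fin d → ℝ) ∈ zonotope G := by
  simpa [zonotope] using
    Set.finsetSum_mem_finsetSum G (segment ℝ 0) 0 fun g _ => left_mem_segment ℝ 0 g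

lemma zonotope_mono {S T : Finset (Fin d → ℝ)} (h : S ⊆ T) : zonotope S ⊆ zonotope T := by
  intro x hx
  rw [← union_sdiff_of_subset h, zonotope_union disjoint_sdiff]
  simpa using Set.add_mem_add hx (zero_mem_zonotope (T \ S))

lemma sum_mem_zonotope {S G : Finset (Fin d → ℝ)} (hS : S ⊆ G) : ∑ g ∈ S, g ∈ zonotope G :=
  zonotope_mono hS <| Set.finsetSum_mem_finsetSum S _ id fun g _ => right_mem_segment ℝ 0 g

lemma sum_sub_mem_zonotope {S G : Finset (Fin d → ℝ)} (hS : S ⊆ G) {g : Fin d → ℝ}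
    (hg : g ∈ S) : ∑ g ∈ S, g - g ∈ zonotope G := by
  rw [← eq_sub_of_add_eq (sum_erase_add S (fun g => g) hg)]
  exact sum_mem_zonotope ((erase_subset g S).trans hS)

lemma sum_add_mem_zonotope {S G : Finset (Fin d → ℝ)} (hS : S ⊆ G) {g : Fin d → ℝ}
    (hgG : g ∈ G) (hgS : g ∉ S) : ∑ g ∈ S, g + g ∈ zonotope G := by
  rw [add_comm, ← sum_insert (f := fun g => g) hgS]
  exact sum_mem_zonotope (insert_subset hgG hS)

lemma exists_sum_eq_of_mem_extremePoints {G : Finset (Fin d → ℝ)} {x : Fin d → ℝ}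
    (hx : x ∈ (zonotope G).extremePoints ℝ) : ∃ S ⊆ G, ∑ g ∈ S, g = x := by
  rw [zonotope_eq_convexHull] at hx
  obtain ⟨y, hy, rfl⟩ := (Set.mem_finsetSum _ _ _).1 (extremePoints_convexHull_subset hx)
  refine ⟨{g ∈ G | y g = g}, filter_subset _ _, ?_⟩
  rw [sum_filter]
  refine sum_congr rfl fun g hg => ?_
  obtain h | h : y g = 0 ∨ y g = g := hy hg
  · simp [h, eq_comm]
  · simp [h]

noncomputable def posGens (f : StrongDual ℝ (Fin d → ℝ)) (G : Finset (Fin d → ℝ)) :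
    Finset (Fin d → ℝ) :=
  {g ∈ G | 0 < f g}

def IsGeneric (f : StrongDual ℝ (Fin d → ℝ)) (G : Finset (Fin d → ℝ)) : Prop :=
  ∀ g ∈ G, f g ≠ 0

lemma posGens_subset (f : StrongDual ℝ (Fin d → ℝ)) (G : Finset (Fin d → ℝ)) :
    posGens f G ⊆ G :=
  filter_subset _ _

lemma apply_sum_posGens (f : StrongDual ℝ (Fin d → ℝ)) (G : Finset (Fin d → ℝ)) :
    f (∑ g ∈ posGens f G, g) = ∑ g ∈ G, max (f g) 0 := by
  rw [map_sum, posGens, sum_filter]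
  refine sum_congr rfl fun g _ => ?_
  split_ifs with h
  exacts [(max_eq_left h.le).symm, (max_eq_right (not_lt.1 h)).symm]

lemma apply_eq_zero_of_mem_zonotope {f : StrongDual ℝ (Fin d → ℝ)} {K : Finset (Fin d → ℝ)}
    (hK : ∀ g ∈ K, f g = 0) {z : Fin d → ℝ} (hz : z ∈ zonotope K) : f z = 0 := by
  obtain ⟨t, -, rfl⟩ := mem_zonotope_iff.1 hz
  simpa using sum_eq_zero fun g hg => by simp [hK g hg]

lemma apply_le_apply_sum_posGens (f : StrongDual ℝ (Fin d → ℝ)) {G : Finset (Fin d → ℝ)}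
    {y : Fin d → ℝ} (hy : y ∈ zonotope G) : f y ≤ f (∑ g ∈ posGens f G, g) := by
  obtain ⟨t, ht, rfl⟩ := mem_zonotope_iff.1 hy
  rw [apply_sum_posGens]
  simpa using sum_le_sum fun g hg => mul_le_max_zero (a := f g) (ht g hg)

lemma toExposed_zonotope (f : StrongDual ℝ (Fin d → ℝ)) (G : Finset (Fin d → ℝ)) :
    f.toExposed (zonotope G) = (∑ g ∈ posGens f G, g) +ᵥ zonotope {g ∈ G | f g = 0} := by
  set P := posGens f G
  set K := {g ∈ G | f g = 0}
  have hPK : Disjoint P K := disjoint_filter.2 fun g _ hpos hzero => hpos.ne' hzero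
  have hPKG : P ∪ K ⊆ G := union_subset (posGens_subset f G) (filter_subset _ _)
  ext y
  simp only [ContinuousLinearMap.toExposed, Set.mem_ofPred_eq, Set.mem_vadd_set, vadd_eq_add]
  constructor
  · rintro ⟨hy, hmax⟩
    obtain ⟨t, ht, rfl⟩ := mem_zonotope_iff.1 hy
    have heq := le_antisymm (apply_le_apply_sum_posGens f hy)
      (hmax _ (sum_mem_zonotope (posGens_subset f G)))
    rw [apply_sum_posGens] at heq
    simp only [map_sum, map_smul, smul_eq_mul] at heq
    have hterm := (sum_eq_sum_iff_of_le fun g hg => mul_le_max_zero (ht g hg)).1 heq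
    refine ⟨∑ g ∈ K, t g • g,
      mem_zonotope_iff.2 ⟨t, fun g hg => ht g (filter_subset _ _ hg), rfl⟩, ?_⟩
    rw [← sum_subset hPKG, sum_union hPK]
    · refine congrArg (· + _) (sum_congr rfl fun g hg => ?_)
      obtain ⟨hgG, hpos⟩ := mem_filter.1 hg
      have := hterm g hgG
      rw [max_eq_left hpos.le] at this
      rw [(mul_eq_right₀ hpos.ne').1 this, one_smul]
    · intro g hgG hg
      have hneg : f g < 0 := by
        simp only [mem_union, P, K, posGens, mem_filter, not_or, not_and, hgG, true_imp_iff] at hg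
        exact lt_of_le_of_ne (not_lt.1 hg.1) hg.2
      have := hterm g hgG
      rw [max_eq_right hneg.le] at this
      rw [(mul_eq_zero_iff_right hneg.ne).1 this, zero_smul]
  · rintro ⟨z, hz, rfl⟩
    refine ⟨?_, fun w hw => ?_⟩
    · refine zonotope_mono hPKG ?_
      rw [zonotope_union hPK]
      exact Set.add_mem_add (sum_mem_zonotope subset_rfl) hz
    · rw [map_add, apply_eq_zero_of_mem_zonotope (fun g hg => (mem_filter.1 hg).2) hz, add_zero]
      exact apply_le_apply_sum_posGens f hw

lemma toExposed_zonotope_of_isGeneric {f : StrongDual ℝ (Fin d → ℝ)} {G : Finset (Fin d → ℝ)}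
    (hf : IsGeneric f G) : f.toExposed (zonotope G) = {∑ g ∈ posGens f G, g} := by
  rw [toExposed_zonotope, filter_false_of_mem hf, zonotope_empty, Set.vadd_set_singleton,
    vadd_eq_add, add_zero]

lemma sum_posGens_mem_extremePoints {f : StrongDual ℝ (Fin d → ℝ)} {G : Finset (Fin d → ℝ)}
    (hf : IsGeneric f G) : ∑ g ∈ posGens f G, g ∈ (zonotope G).extremePoints ℝ := by
  rw [← isExtreme_singleton, ← toExposed_zonotope_of_isGeneric hf]
  exact ContinuousLinearMap.toExposed.isExposed.isExtreme

lemma isExtreme_segment_sum_posGens {f : StrongDual ℝ (Fin d → ℝ)} {G : Finset (Fin d → ℝ)}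
    {g₀ : Fin d → ℝ} (hg₀ : g₀ ∈ G) (hf₀ : f g₀ = 0) (hf : ∀ g ∈ G, g ≠ g₀ → f g ≠ 0) :
    IsExtreme ℝ (zonotope G)
      (segment ℝ (∑ g ∈ posGens f G, g) (∑ g ∈ posGens f G, g + g₀)) := by
  have hK : {g ∈ G | f g = 0} = {g₀} := by
    ext g
    simp only [mem_filter, mem_singleton]
    exact ⟨fun ⟨hg, h⟩ => by_contra fun hne => hf g hg hne h, by rintro rfl; exact ⟨hg₀, hf₀⟩⟩
  have := (ContinuousLinearMap.toExposed.isExposed (l := f) (A := zonotope G)).isExtreme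
  rwa [toExposed_zonotope, hK, zonotope_singleton, vadd_segment, vadd_eq_add, vadd_eq_add,
    add_zero] at this

noncomputable def genericVertex {f : StrongDual ℝ (Fin d → ℝ)} {G : Finset (Fin d → ℝ)}
    (hf : IsGeneric f G) : (zonotope G).extremePoints ℝ :=
  ⟨∑ g ∈ posGens f G, g, sum_posGens_mem_extremePoints hf⟩

lemma isGeneric_of_forall_mul_pos {f f' : StrongDual ℝ (Fin d → ℝ)} {G : Finset (Fin d → ℝ)}
    (h : ∀ g ∈ G, 0 < f g * f' g) : IsGeneric f G :=
  fun g hg => left_ne_zero_of_mul (h g hg).ne'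

lemma posGens_eq_of_forall_mul_pos {f f' : StrongDual ℝ (Fin d → ℝ)} {G : Finset (Fin d → ℝ)}
    (h : ∀ g ∈ G, 0 < f g * f' g) : posGens f G = posGens f' G :=
  filter_congr fun g hg => pos_iff_pos_of_mul_pos (h g hg)

lemma mem_symmDiff_posGens_iff {f f' : StrongDual ℝ (Fin d → ℝ)} {G : Finset (Fin d → ℝ)}
    (hf : IsGeneric f G) (hf' : IsGeneric f' G) {g : Fin d → ℝ} (hg : g ∈ G) :
    g ∈ posGens f G ∆ posGens f' G ↔ f g * f' g < 0 := by
  simp only [mem_symmDiff, posGens, mem_filter, hg, true_and, mul_neg_iff]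
  have hfg := hf g hg
  have hf'g := hf' g hg
  constructor
  · rintro (⟨h₁, h₂⟩ | ⟨h₁, h₂⟩)
    · exact Or.inl ⟨h₁, (not_lt.1 h₂).lt_of_ne hf'g⟩
    · exact Or.inr ⟨(not_lt.1 h₂).lt_of_ne hfg, h₁⟩
  · rintro (⟨h₁, h₂⟩ | ⟨h₁, h₂⟩)
    · exact Or.inl ⟨h₁, h₂.not_gt⟩
    · exact Or.inr ⟨h₂, h₁.not_gt⟩

lemma IsGeneric.neg {f : StrongDual ℝ (Fin d → ℝ)} {G : Finset (Fin d → ℝ)} (hf : IsGeneric f G) :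
    IsGeneric (-f) G :=
  fun g hg => by simpa using hf g hg

lemma posGens_symmDiff_posGens_neg {f : StrongDual ℝ (Fin d → ℝ)} {G : Finset (Fin d → ℝ)}
    (hf : IsGeneric f G) : posGens f G ∆ posGens (-f) G = G := by
  refine Subset.antisymm (symmDiff_subset_of_subset (posGens_subset _ G) (posGens_subset _ G))
    fun g hg => (mem_symmDiff_posGens_iff hf hf.neg hg).2 ?_
  simpa using mul_self_pos.2 (hf g hg)

/-- A vertex `x = ∑ g ∈ S, g` is not in the convex hull of its neighbours `x ± g`, and a
functional separating `x` from them is positive exactly on `S`. -/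
lemma exists_isGeneric_of_mem_extremePoints {G : Finset (Fin d → ℝ)} (h0 : (0 : Fin d → ℝ) ∉ G)
    {x : Fin d → ℝ} (hx : x ∈ (zonotope G).extremePoints ℝ) :
    ∃ f : StrongDual ℝ (Fin d → ℝ), IsGeneric f G ∧ ∑ g ∈ posGens f G, g = x := by
  obtain ⟨S, hSG, rfl⟩ := exists_sum_eq_of_mem_extremePoints hx
  set x := ∑ g ∈ S, g
  set N := G.image fun g => if g ∈ S then x - g else x + g
  have hNZ : (N : Set (Fin d → ℝ)) ⊆ zonotope G := by
    simp only [N, coe_image, Set.image_subset_iff]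
    intro g hg
    by_cases hgS : g ∈ S
    · simpa [hgS] using sum_sub_mem_zonotope hSG hgS
    · simpa [hgS] using sum_add_mem_zonotope hSG hg hgS
  have hxN : x ∉ convexHull ℝ (N : Set (Fin d → ℝ)) := by
    intro hmem
    have := extremePoints_convexHull_subset (inter_extremePoints_subset_extremePoints_of_subset
      (convexHull_min hNZ (convex_zonotope G)) ⟨hmem, hx⟩)
    obtain ⟨g, hg, hgx⟩ := mem_image.1 (mem_coe.1 this)
    have hg0 : g = 0 := by split_ifs at hgx <;> simpa using hgx
    exact h0 (hg0 ▸ hg)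
  obtain ⟨f, u, hfu, hux⟩ := geometric_hahn_banach_closed_point (convex_convexHull ℝ _)
    (N.finite_toSet.isCompact_convexHull ℝ).isClosed hxN
  have hlt : ∀ g ∈ G, f (if g ∈ S then x - g else x + g) < f x := fun g hg =>
    (hfu _ (subset_convexHull ℝ _ (mem_coe.2 (mem_image_of_mem _ hg)))).trans hux
  have hpos : ∀ g ∈ G, (0 < f g ↔ g ∈ S) ∧ f g ≠ 0 := by
    intro g hg
    have := hlt g hg
    by_cases hgS : g ∈ S
    · simp only [hgS, if_true, map_sub] at this
      exact ⟨iff_of_true (by linarith) hgS, by linarith⟩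
    · simp only [hgS, if_false, map_add] at this
      exact ⟨iff_of_false (by linarith) hgS, by linarith⟩
  refine ⟨f, fun g hg => (hpos g hg).2, congrArg (fun s => ∑ g ∈ s, g) ?_⟩
  ext g
  simp only [posGens, mem_filter]
  exact ⟨fun ⟨hg, h⟩ => (hpos g hg).1.1 h, fun hgS => ⟨hSG hgS, (hpos g (hSG hgS)).1.2 hgS⟩⟩

/-- For `g ∈ S \ T`, the midpoint of the segment is also the midpoint of two points of the
zonotope that differ by `g`. -/
lemma mem_span_of_isExtreme_segment {G S T : Finset (Fin d → ℝ)} (hS : S ⊆ G) (hT : T ⊆ G)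
    (hST : IsExtreme ℝ (zonotope G) (segment ℝ (∑ g ∈ S, g) (∑ g ∈ T, g)))
    {g : Fin d → ℝ} (hg : g ∈ S ∆ T) : g ∈ ℝ ∙ (∑ g ∈ T, g - ∑ g ∈ S, g) := by
  wlog hgS : g ∈ S generalizing S T
  · have hgT : g ∈ T := ((mem_symmDiff.1 hg).resolve_left fun h => hgS h.1).1
    obtain ⟨c, hc⟩ := Submodule.mem_span_singleton.1 <|
      this hT hS (segment_symm ℝ (∑ g ∈ S, g) _ ▸ hST) (symmDiff_comm S T ▸ hg) hgT
    exact Submodule.mem_span_singleton.2 ⟨-c, by rw [← hc]; module⟩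
  have hgT : g ∉ T := ((mem_symmDiff.1 hg).resolve_right fun h => h.2 hgS).2
  have ha := sum_sub_mem_zonotope hS hgS
  have hb := sum_add_mem_zonotope hT (hS hgS) hgT
  set a := ∑ g ∈ S, g
  set b := ∑ g ∈ T, g
  have hp := convex_zonotope G ha (sum_mem_zonotope hT) (by norm_num : (0 : ℝ) ≤ 1 / 2)
    (by norm_num : (0 : ℝ) ≤ 1 / 2) (by norm_num)
  have hq := convex_zonotope G (sum_mem_zonotope hS) hb (by norm_num : (0 : ℝ) ≤ 1 / 2)
    (by norm_num : (0 : ℝ) ≤ 1 / 2) (by norm_num)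
  have hmid : (1 / 2 : ℝ) • a + (1 / 2 : ℝ) • b ∈ segment ℝ a b :=
    ⟨1 / 2, 1 / 2, by norm_num, by norm_num, by norm_num, rfl⟩
  have hopen : (1 / 2 : ℝ) • a + (1 / 2 : ℝ) • b ∈ openSegment ℝ
      ((1 / 2 : ℝ) • (a - g) + (1 / 2 : ℝ) • b) ((1 / 2 : ℝ) • a + (1 / 2 : ℝ) • (b + g)) :=
    ⟨1 / 2, 1 / 2, by norm_num, by norm_num, by norm_num, by module⟩
  convert sub_mem_span_singleton_of_mem_segment (hST.left_mem_of_mem_openSegment hp hq hmid hopen)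
    (hST.right_mem_of_mem_openSegment hp hq hmid hopen) using 1
  module

lemma symmDiff_eq_empty_of_sum_eq {G S T : Finset (Fin d → ℝ)} (h0 : (0 : Fin d → ℝ) ∉ G)
    (hS : S ⊆ G) (hT : T ⊆ G) (hx : ∑ g ∈ S, g ∈ (zonotope G).extremePoints ℝ)
    (hST : ∑ g ∈ S, g = ∑ g ∈ T, g) : S ∆ T = ∅ := by
  refine eq_empty_of_forall_notMem fun g hg => h0 ?_
  have := mem_span_of_isExtreme_segment hS hT (by rwa [← hST, segment_same, isExtreme_singleton]) hg
  rw [hST, sub_self, Submodule.span_singleton_eq_bot.2 rfl, Submodule.mem_bot] at this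
  exact this ▸ symmDiff_subset_of_subset hS hT hg

lemma card_symmDiff_le_one_of_isExtreme_segment {G S T : Finset (Fin d → ℝ)}
    (h0 : (0 : Fin d → ℝ) ∉ G)
    (hnc : (G : Set (Fin d → ℝ)).Pairwise fun g g' => ∀ c : ℝ, g' ≠ c • g)
    (hS : S ⊆ G) (hT : T ⊆ G)
    (hST : IsExtreme ℝ (zonotope G) (segment ℝ (∑ g ∈ S, g) (∑ g ∈ T, g))) :
    #(S ∆ T) ≤ 1 := by
  refine card_le_one.2 fun g₁ h₁ g₂ h₂ => by_contra fun hne => ?_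
  have hG := symmDiff_subset_of_subset hS hT
  obtain ⟨a, rfl⟩ := Submodule.mem_span_singleton.1 (mem_span_of_isExtreme_segment hS hT hST h₁)
  obtain ⟨b, rfl⟩ := Submodule.mem_span_singleton.1 (mem_span_of_isExtreme_segment hS hT hST h₂)
  have ha : a ≠ 0 := by
    rintro rfl
    exact h0 (by simpa using hG h₁)
  exact hnc (hG h₁) (hG h₂) hne (b / a) (by rw [smul_smul, div_mul_cancel₀ _ ha])

lemma card_symmDiff_le_length {G : Finset (Fin d → ℝ)} (h0 : (0 : Fin d → ℝ) ∉ G)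
    (hnc : (G : Set (Fin d → ℝ)).Pairwise fun g g' => ∀ c : ℝ, g' ≠ c • g)
    {u v : (zonotope G).extremePoints ℝ} (p : (polytopeGraph (zonotope G)).Walk u v)
    {S T : Finset (Fin d → ℝ)} (hS : S ⊆ G) (hT : T ⊆ G)
    (hu : ∑ g ∈ S, g = u) (hv : ∑ g ∈ T, g = v) : #(S ∆ T) ≤ p.length := by
  induction p generalizing S with
  | nil =>
    rw [symmDiff_eq_empty_of_sum_eq h0 hS hT (hu ▸ Subtype.prop _) (hu.trans hv.symm)]
    simp
  | @cons _ w _ hadj p ih =>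
    obtain ⟨R, hR, hRw⟩ := exists_sum_eq_of_mem_extremePoints w.2
    have hSR := card_symmDiff_le_one_of_isExtreme_segment h0 hnc hS hR (hu ▸ hRw ▸ hadj.2)
    calc #(S ∆ T) ≤ #(S ∆ R ∪ R ∆ T) := card_le_card (symmDiff_triangle S R T)
      _ ≤ #(S ∆ R) + #(R ∆ T) := card_union_le _ _
      _ ≤ 1 + p.length := add_le_add hSR (ih hR hRw hv)
      _ = (SimpleGraph.Walk.cons hadj p).length := by
        rw [SimpleGraph.Walk.length_cons, add_comm]

/-- No nonzero combination `a • f + b • f'` vanishes on two distinct generators. -/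
def IsTransversal (f f' : StrongDual ℝ (Fin d → ℝ)) (G : Finset (Fin d → ℝ)) : Prop :=
  (G : Set (Fin d → ℝ)).Pairwise fun g₁ g₂ => f g₁ * f' g₂ ≠ f g₂ * f' g₁

lemma exists_isTransversal {G : Finset (Fin d → ℝ)}
    (hnc : (G : Set (Fin d → ℝ)).Pairwise fun g g' => ∀ c : ℝ, g' ≠ c • g)
    {f f' : StrongDual ℝ (Fin d → ℝ)} (hf : IsGeneric f G) (hf' : IsGeneric f' G) :
    ∃ f'' : StrongDual ℝ (Fin d → ℝ), (∀ g ∈ G, 0 < f'' g * f' g) ∧ IsTransversal f f'' G := by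
  set W := G.offDiag.image fun p => f p.1 • p.2 - f p.2 • p.1
  have hW : (0 : Fin d → ℝ) ∉ W := by
    simp only [W, mem_image, mem_offDiag, not_exists, not_and]
    rintro ⟨g₁, g₂⟩ ⟨hg₁, hg₂, hne⟩ h
    refine hnc hg₁ hg₂ hne (f g₂ / f g₁) ?_
    rw [div_eq_inv_mul, ← smul_smul, ← sub_eq_zero.1 h, inv_smul_smul₀ (hf g₁ hg₁)]
  set U := ⋂ g ∈ G, {c : StrongDual ℝ (Fin d → ℝ) | 0 < c g * f' g}
  have hU : IsOpen U := isOpen_biInter_finset fun g _ =>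
    isOpen_lt continuous_const ((continuous_eval_const g).mul continuous_const)
  have hf'U : f' ∈ U := Set.mem_iInter₂.2 fun g hg => mul_self_pos.2 (hf' g hg)
  obtain ⟨f'', hf''U, hf''W⟩ := exists_mem_forall_apply_ne_zero hW hU ⟨f', hf'U⟩
  refine ⟨f'', fun g hg => Set.mem_iInter₂.1 hf''U g hg, fun g₁ hg₁ g₂ hg₂ hne h => ?_⟩
  refine hf''W _ (mem_image.2 ⟨(g₁, g₂), mem_offDiag.2 ⟨hg₁, hg₂, hne⟩, rfl⟩) ?_
  simp only [map_sub, map_smul, smul_eq_mul]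
  linear_combination h

/-- Along `t ↦ (1 - t) • f + t • f'`, the generators `g` with `f g * f' g < 0` change sign, at
the times `f g / (f g - f' g)`, which are distinct by transversality. At the first such time the
functional vanishes on a single generator `g₀`, and shortly after it differs in sign from `f`
exactly at `g₀`. -/
lemma exists_first_crossing {G : Finset (Fin d → ℝ)} {f f' : StrongDual ℝ (Fin d → ℝ)}
    (hf : IsGeneric f G) (hf' : IsGeneric f' G) (htr : IsTransversal f f' G)
    {g₁ : Fin d → ℝ} (hg₁ : g₁ ∈ G) (h₁ : f g₁ * f' g₁ < 0) :
    ∃ g₀ ∈ G, f g₀ * f' g₀ < 0 ∧ ∃ h f'' : StrongDual ℝ (Fin d → ℝ), h g₀ = 0 ∧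
      (∀ g ∈ G, g ≠ g₀ → 0 < h g * f g) ∧ (∀ g ∈ G, g ≠ g₀ → 0 < f'' g * f g) ∧
      f'' g₀ * f g₀ < 0 ∧ IsTransversal f'' f' G := by
  set E := {g ∈ G | f g * f' g < 0}
  set τ : (Fin d → ℝ) → ℝ := fun g => f g / (f g - f' g)
  set ℓ : ℝ → StrongDual ℝ (Fin d → ℝ) := fun t => (1 - t) • f + t • f'
  have hℓ : ∀ t g, ℓ t g = (1 - t) * f g + t * f' g := fun t g => rfl
  obtain ⟨g₀, hg₀E, hmin⟩ := E.exists_min_image τ ⟨g₁, mem_filter.2 ⟨hg₁, h₁⟩⟩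
  obtain ⟨hg₀, h₀⟩ := mem_filter.1 hg₀E
  have hτ₀ := div_sub_mem_Ioo_of_mul_neg h₀
  have hlt : ∀ g ∈ E, g ≠ g₀ → τ g₀ < τ g := fun g hg hne =>
    (hmin g hg).lt_of_ne fun heq => htr hg₀ (mem_filter.1 hg).1 hne.symm
      (mul_eq_mul_of_div_sub_eq h₀ (mem_filter.1 hg).2 heq)
  have hbefore : ∀ t ∈ Set.Icc (0 : ℝ) 1, (∀ g ∈ E, g ≠ g₀ → t < τ g) →
      ∀ g ∈ G, g ≠ g₀ → 0 < ℓ t g * f g := by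
    intro t ht htE g hg hne
    rw [hℓ]
    by_cases hgE : f g * f' g < 0
    · rw [lerp_mul_eq_of_mul_neg hgE]
      exact mul_pos (mul_sub_pos_of_mul_neg hgE) (sub_pos.2 (htE g (mem_filter.2 ⟨hg, hgE⟩) hne))
    · exact lerp_mul_pos_of_mul_pos
        ((not_lt.1 hgE).lt_of_ne (mul_ne_zero (hf g hg) (hf' g hg)).symm) ht.1 ht.2
  obtain ⟨s, hs, hs₁, hsE⟩ : ∃ s, τ g₀ < s ∧ s < 1 ∧ ∀ g ∈ E, g ≠ g₀ → s < τ g := by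
    have : ∀ᶠ s in nhds (τ g₀), s < 1 ∧ ∀ g ∈ E.erase g₀, s < τ g :=
      (eventually_lt_nhds hτ₀.2).and <| (eventually_all_finset _).2 fun g hg =>
        eventually_lt_nhds (hlt g (mem_of_mem_erase hg) (ne_of_mem_erase hg))
    obtain ⟨s, ⟨hs₁, hsE⟩, hs⟩ := ((this.filter_mono nhdsWithin_le_nhds).and
      (self_mem_nhdsWithin (s := Set.Ioi (τ g₀)))).exists
    exact ⟨s, hs, hs₁, fun g hg hne => hsE g (mem_erase.2 ⟨hne, hg⟩)⟩
  refine ⟨g₀, hg₀, h₀, ℓ (τ g₀), ℓ s, ?_, hbefore _ ⟨hτ₀.1.le, hτ₀.2.le⟩ hlt,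
    hbefore _ ⟨(hτ₀.1.trans hs).le, hs₁.le⟩ hsE, ?_, ?_⟩
  · have := lerp_mul_eq_of_mul_neg h₀ (τ g₀)
    rw [sub_self, mul_zero, ← hℓ] at this
    exact (mul_eq_zero_iff_right (hf g₀ hg₀)).1 this
  · rw [hℓ, lerp_mul_eq_of_mul_neg h₀]
    exact mul_neg_of_pos_of_neg (mul_sub_pos_of_mul_neg h₀) (sub_neg.2 hs)
  · intro g hg g' hg' hne heq
    refine htr hg hg' hne ?_
    simp only [hℓ] at heq
    have : (1 - s) * (f g * f' g' - f g' * f' g) = 0 := by linear_combination heq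
    exact sub_eq_zero.1 ((mul_eq_zero_iff_left (by linarith)).1 this)

/-- The face of `h` is the edge from `∑ g ∈ posGens h G, g` to that vertex plus `g₀`, and the
vertices of `f` and `f''` are its two ends. -/
lemma adj_genericVertex_of_crossing {G : Finset (Fin d → ℝ)} {f f'' h : StrongDual ℝ (Fin d → ℝ)}
    (hf : IsGeneric f G) (hf'' : IsGeneric f'' G) {g₀ : Fin d → ℝ} (hg₀ : g₀ ∈ G)
    (hh₀ : h g₀ = 0) (hh : ∀ g ∈ G, g ≠ g₀ → 0 < h g * f g)
    (hf''f : ∀ g ∈ G, g ≠ g₀ → 0 < f'' g * f g) (hf''₀ : f'' g₀ * f g₀ < 0) :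
    (polytopeGraph (zonotope G)).Adj (genericVertex hf) (genericVertex hf'') := by
  wlog hneg : f g₀ < 0 generalizing f f''
  · have hpos : 0 < f g₀ := (not_lt.1 hneg).lt_of_ne (hf g₀ hg₀).symm
    refine (this hf'' hf (fun g hg hne => ?_) (fun g hg hne => ?_) (by rwa [mul_comm])
      (by nlinarith)).symm
    · nlinarith [sq_nonneg (f g), mul_pos (hh g hg hne) (hf''f g hg hne)]
    · rw [mul_comm]
      exact hf''f g hg hne
  have hP : posGens f G = posGens h G := by
    refine filter_congr fun g hg => ?_
    rcases eq_or_ne g g₀ with rfl | hne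
    · simp [hh₀, hneg.not_gt]
    · exact (pos_iff_pos_of_mul_pos (hh g hg hne)).symm
  have hg₀P : g₀ ∉ posGens f G := fun h => hneg.not_gt (mem_filter.1 h).2
  have hP'' : posGens f'' G = insert g₀ (posGens f G) := by
    ext g
    simp only [posGens, mem_insert, mem_filter]
    rcases eq_or_ne g g₀ with rfl | hne
    · simpa [hg₀] using (by nlinarith : 0 < f'' g)
    · refine ⟨fun ⟨hg, hpos⟩ => Or.inr ⟨hg, ?_⟩, ?_⟩
      · exact (pos_iff_pos_of_mul_pos (hf''f g hg hne)).1 hpos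
      · rintro (rfl | ⟨hg, hpos⟩)
        · exact absurd rfl hne
        · exact ⟨hg, (pos_iff_pos_of_mul_pos (hf''f g hg hne)).2 hpos⟩
  refine ⟨fun heq => ?_, ?_⟩
  · have := congrArg Subtype.val heq
    simp only [genericVertex, hP'', sum_insert hg₀P] at this
    exact hneg.ne (by rw [add_eq_right.1 this.symm, map_zero])
  · show IsExtreme ℝ (zonotope G) (segment ℝ (∑ g ∈ posGens f G, g) (∑ g ∈ posGens f'' G, g))
    rw [hP'', sum_insert hg₀P, add_comm, hP]
    exact isExtreme_segment_sum_posGens hg₀ hh₀ fun g hg hne =>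
      left_ne_zero_of_mul (hh g hg hne).ne'

lemma exists_walk_genericVertex {G : Finset (Fin d → ℝ)} {f f' : StrongDual ℝ (Fin d → ℝ)}
    (hf : IsGeneric f G) (hf' : IsGeneric f' G) (htr : IsTransversal f f' G) :
    ∃ p : (polytopeGraph (zonotope G)).Walk (genericVertex hf) (genericVertex hf'),
      p.length ≤ #(posGens f G ∆ posGens f' G) := by
  induction hk : #(posGens f G ∆ posGens f' G) using Nat.strong_induction_on generalizing f with
  | _ k ih =>
  obtain hE | ⟨g₁, hg₁⟩ := (posGens f G ∆ posGens f' G).eq_empty_or_nonempty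
  · have : genericVertex hf = genericVertex hf' :=
      Subtype.ext (congrArg (fun s => ∑ g ∈ s, g) (symmDiff_eq_bot.1 hE))
    exact ⟨SimpleGraph.Walk.nil.copy rfl this, by simp⟩
  have hG : ∀ f₁ f₂ : StrongDual ℝ (Fin d → ℝ), posGens f₁ G ∆ posGens f₂ G ⊆ G := fun _ _ =>
    symmDiff_subset_of_subset (posGens_subset _ G) (posGens_subset _ G)
  obtain ⟨g₀, hg₀, h₀, h, f'', hh₀, hh, hf''f, hf''₀, htr''⟩ :=
    exists_first_crossing hf hf' htr (hG _ _ hg₁)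
      ((mem_symmDiff_posGens_iff hf hf' (hG _ _ hg₁)).1 hg₁)
  have hf'' : IsGeneric f'' G := fun g hg => by
    rcases eq_or_ne g g₀ with rfl | hne
    exacts [left_ne_zero_of_mul hf''₀.ne, left_ne_zero_of_mul (hf''f g hg hne).ne']
  have hsub : posGens f'' G ∆ posGens f' G ⊆ (posGens f G ∆ posGens f' G).erase g₀ := by
    intro g hg
    have hneg := (mem_symmDiff_posGens_iff hf'' hf' (hG _ _ hg)).1 hg
    have hne : g ≠ g₀ := by
      rintro rfl
      nlinarith [mul_pos_of_neg_of_neg hf''₀ h₀, sq_nonneg (f g)]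
    refine mem_erase.2 ⟨hne, (mem_symmDiff_posGens_iff hf hf' (hG _ _ hg)).2 ?_⟩
    nlinarith [mul_neg_of_pos_of_neg (hf''f g (hG _ _ hg) hne) hneg, sq_nonneg (f'' g)]
  have hcard : #(posGens f'' G ∆ posGens f' G) < k := by
    have := card_le_card hsub
    rw [card_erase_of_mem ((mem_symmDiff_posGens_iff hf hf' hg₀).2 h₀), hk] at this
    have : 0 < k := hk ▸ card_pos.2 ⟨g₁, hg₁⟩
    omega
  obtain ⟨p, hp⟩ := ih _ hcard hf'' htr'' rfl
  refine ⟨.cons (adj_genericVertex_of_crossing hf hf'' hg₀ hh₀ hh hf''f hf''₀) p, ?_⟩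
  rw [SimpleGraph.Walk.length_cons]
  omega

lemma exists_walk_length_le_card {G : Finset (Fin d → ℝ)} (h0 : (0 : Fin d → ℝ) ∉ G)
    (hnc : (G : Set (Fin d → ℝ)).Pairwise fun g g' => ∀ c : ℝ, g' ≠ c • g)
    (u v : (zonotope G).extremePoints ℝ) :
    ∃ p : (polytopeGraph (zonotope G)).Walk u v, p.length ≤ #G := by
  obtain ⟨fu, hfu, hu⟩ := exists_isGeneric_of_mem_extremePoints h0 u.2
  obtain ⟨fv, hfv, hv⟩ := exists_isGeneric_of_mem_extremePoints h0 v.2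
  obtain ⟨f, hf, htr⟩ := exists_isTransversal hnc hfu hfv
  obtain ⟨p, hp⟩ := exists_walk_genericVertex hfu (isGeneric_of_forall_mul_pos hf) htr
  refine ⟨p.copy (Subtype.ext hu) (Subtype.ext <|
    (congrArg (fun s => ∑ g ∈ s, g) (posGens_eq_of_forall_mul_pos hf)).trans hv), ?_⟩
  rw [SimpleGraph.Walk.length_copy]
  exact hp.trans <|
    card_le_card (symmDiff_subset_of_subset (posGens_subset _ G) (posGens_subset _ G))

lemma graphDiam_eq_of_forall_dist_le {P : Set (Fin d → ℝ)} {n : ℕ}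
    (hle : ∀ u v, (polytopeGraph P).dist u v ≤ n) (hex : ∃ u v, (polytopeGraph P).dist u v = n) :
    graphDiam P = n :=
  IsGreatest.csSup_eq ⟨hex, by rintro _ ⟨u, v, rfl⟩; exact hle u v⟩

/-- The graph diameter of a zonotope generated by n pairwise non-collinear (nonzero)
line segments equals n. -/
theorem stmt_15 (d : ℕ) (G : Finset (Fin d → ℝ)) (h0 : (0 : Fin d → ℝ) ∉ G)
    (hnc : (G : Set (Fin d → ℝ)).Pairwise fun g g' => ∀ c : ℝ, g' ≠ c • g) :
    graphDiam (zonotope G) = G.card := by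
  have hle : ∀ u v, (polytopeGraph (zonotope G)).dist u v ≤ #G := fun u v =>
    let ⟨p, hp⟩ := exists_walk_length_le_card h0 hnc u v
    (SimpleGraph.dist_le p).trans hp
  obtain ⟨f, -, hf⟩ : ∃ f ∈ Set.univ, IsGeneric f G :=
    exists_mem_forall_apply_ne_zero h0 isOpen_univ Set.univ_nonempty
  obtain ⟨p, -⟩ := exists_walk_length_le_card h0 hnc (genericVertex hf) (genericVertex hf.neg)
  obtain ⟨q, hq⟩ := p.reachable.exists_walk_length_eq_dist
  refine graphDiam_eq_of_forall_dist_le hle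
    ⟨genericVertex hf, genericVertex hf.neg, (hle _ _).antisymm ?_⟩
  calc #G = #(posGens f G ∆ posGens (-f) G) := by rw [posGens_symmDiff_posGens_neg hf]
    _ ≤ q.length :=
      card_symmDiff_le_length h0 hnc q (posGens_subset _ G) (posGens_subset _ G) rfl rfl
    _ = _ := hq
end
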